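/- Let h be a Lie algebra with a derivation D₀, and form the semidirect product g = h ⋊ ℝD with [D,X] = D₀X for X ∈ h. Suppose h carries an ad-invariant (with respect to h) symmetric bilinear form ⟨-,-⟩₀ with respect to which D₀ is skew-symmetric. Then the symmetric bivector γ ∈ Sym²(g) obtained by pushing forward the inverse of ⟨-,-⟩₀ along the inclusion h ⊂ g is ad-invariant under g, and the functional τ ∈ g* defined by τ(X + sD) = s vanishes on [g,g]; thus (g, τ, γ) is a (pseudo-)galilean Lie algebra when ⟨-,-⟩₀ is nondegenerate. -/
import Mathlib


/-- The adjoint action of `W = (w, s)` on the semidirect product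
`g = h ⋊ ℝD`, with `ℝ` acting on `h` by a derivation `D₀`:
`ad_W (y, t) = ([w,y] + s D₀ y - t D₀ w, 0)`. -/
noncomputable def sdAd {H : Type*} [LieRing H] [LieAlgebra ℝ H]
    (D₀ : H →ₗ[ℝ] H) (W : H × ℝ) : H × ℝ →ₗ[ℝ] H × ℝ :=
  (LinearMap.inl ℝ H ℝ).comp
    (((LieAlgebra.ad ℝ H W.1 + W.2 • D₀).comp (LinearMap.fst ℝ H ℝ)) -
      ((LinearMap.toSpanSingleton ℝ H (D₀ W.1)).comp (LinearMap.snd ℝ H ℝ)))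

/-- The symmetric bivector `γ ∈ Sym²(g)` on `g = h ⋊ ℝD` obtained by pushing
forward the inverse `φ` of the musical map of `⟨-,-⟩₀` along `h ⊂ g`,
regarded as a bilinear form on `g*`. -/
noncomputable def sdGamma {H : Type*} [LieRing H] [LieAlgebra ℝ H]
    (B₀ : LinearMap.BilinForm ℝ H) (φ : Module.Dual ℝ H →ₗ[ℝ] H)
    (ξ η : Module.Dual ℝ (H × ℝ)) : ℝ :=
  B₀ (φ (ξ.comp (LinearMap.inl ℝ H ℝ))) (φ (η.comp (LinearMap.inl ℝ H ℝ)))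

/-- If `h` is a metric Lie algebra and `D₀` a skew-symmetric derivation, then
on the semidirect product `g = h ⋊ ℝD` the functional `τ(X + sD) = s`
vanishes on brackets and is nonzero, the pushed-forward bivector `γ` is
ad-invariant, and the radical of `γ` on `g*` is spanned by `τ`: `(g, τ, γ)`
is a (pseudo-)galilean Lie algebra. -/
theorem semidirect_product_is_galilean
    {H : Type*} [LieRing H] [LieAlgebra ℝ H]
    (B₀ : LinearMap.BilinForm ℝ H)
    (hBsymm : ∀ x y : H, B₀ x y = B₀ y x)
    (hBnondeg : ∀ x : H, (∀ y : H, B₀ x y = 0) → x = 0)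
    (hBinv : ∀ w x y : H, B₀ ⁅w, x⁆ y = - B₀ x ⁅w, y⁆)
    (D₀ : H →ₗ[ℝ] H)
    (hD₀skew : ∀ x y : H, B₀ (D₀ x) y = - B₀ x (D₀ y))
    (hD₀der : ∀ x y : H, D₀ ⁅x, y⁆ = ⁅D₀ x, y⁆ + ⁅x, D₀ y⁆)
    (φ : Module.Dual ℝ H →ₗ[ℝ] H)
    (hφ : ∀ (ξ : Module.Dual ℝ H) (y : H), B₀ (φ ξ) y = ξ y) :
    -- `τ = snd` is nonzero and vanishes on all brackets
    (LinearMap.snd ℝ H ℝ : Module.Dual ℝ (H × ℝ)) ≠ 0 ∧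
    (∀ W V : H × ℝ, LinearMap.snd ℝ H ℝ (sdAd D₀ W V) = 0) ∧
    -- `γ` is ad-invariant under every element of `g`
    (∀ (W : H × ℝ) (ξ η : Module.Dual ℝ (H × ℝ)),
      sdGamma B₀ φ (ξ.comp (sdAd D₀ W)) η +
        sdGamma B₀ φ ξ (η.comp (sdAd D₀ W)) = 0) ∧
    -- the radical of `γ` is spanned by `τ`
    (∀ ξ : Module.Dual ℝ (H × ℝ),
      (∀ η : Module.Dual ℝ (H × ℝ), sdGamma B₀ φ ξ η = 0) ↔
        ∃ c : ℝ, ξ = c • (LinearMap.snd ℝ H ℝ : Module.Dual ℝ (H × ℝ))) := by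

  classical
  have hsd : ∀ (W : H × ℝ) (y : H),
      sdAd D₀ W (y, (0:ℝ)) = (⁅W.1, y⁆ + W.2 • D₀ y, 0) := by
    intro W y
    simp [sdAd, LieAlgebra.ad_apply]
  have hcomp : ∀ (W : H × ℝ) (ξ : Module.Dual ℝ (H × ℝ)) (y : H),
      ((ξ.comp (sdAd D₀ W)).comp (LinearMap.inl ℝ H ℝ)) y =
        (ξ.comp (LinearMap.inl ℝ H ℝ)) (⁅W.1, y⁆ + W.2 • D₀ y) := by
    intro W ξ y
    simp only [LinearMap.comp_apply, LinearMap.inl_apply, hsd W y]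
  refine ⟨?_, ?_, ?_, ?_⟩
  · intro h
    have := LinearMap.congr_fun h ((0:H), (1:ℝ))
    simp at this
  · intro W V
    simp [sdAd]
  · intro W ξ η
    set ξ₁ := ξ.comp (LinearMap.inl ℝ H ℝ) with hξ₁
    set η₁ := η.comp (LinearMap.inl ℝ H ℝ) with hη₁
    set a := φ ξ₁ with ha
    set b := φ η₁ with hb
    have h1 : sdGamma B₀ φ (ξ.comp (sdAd D₀ W)) η =
        B₀ a ⁅W.1, b⁆ + W.2 * B₀ a (D₀ b) := by
      unfold sdGamma
      rw [← hη₁, ← hb, hφ, hcomp W ξ b, ← hξ₁]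
      rw [← hφ ξ₁ (⁅W.1, b⁆ + W.2 • D₀ b), ← ha, map_add, map_smul]
      simp [smul_eq_mul]
    have h2 : sdGamma B₀ φ ξ (η.comp (sdAd D₀ W)) =
        B₀ b ⁅W.1, a⁆ + W.2 * B₀ b (D₀ a) := by
      unfold sdGamma
      rw [← hξ₁, ← ha, hBsymm, hφ, hcomp W η a, ← hη₁]
      rw [← hφ η₁ (⁅W.1, a⁆ + W.2 • D₀ a), ← hb, map_add, map_smul]
      simp [smul_eq_mul]
    have h3 : B₀ b ⁅W.1, a⁆ = - B₀ a ⁅W.1, b⁆ := by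
      linarith [hBinv W.1 b a, hBsymm ⁅W.1, b⁆ a]
    have h4 : B₀ b (D₀ a) = - B₀ a (D₀ b) := by
      rw [← hD₀skew a b, hBsymm]
    rw [h1, h2, h3, h4]
    ring
  · intro ξ
    constructor
    · intro h
      have hx : ∀ y : H, (ξ.comp (LinearMap.inl ℝ H ℝ)) y = 0 := by
        intro y
        have h0 := h ((B₀ y).comp (LinearMap.fst ℝ H ℝ))
        have he : ((B₀ y).comp (LinearMap.fst ℝ H ℝ)).comp (LinearMap.inl ℝ H ℝ)
            = B₀ y := by
          ext z; simp
        unfold sdGamma at h0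
        rw [he] at h0
        rw [hBsymm, hφ, hBsymm] at h0
        rw [← h0, ← hφ (ξ.comp (LinearMap.inl ℝ H ℝ)) y, hBsymm]
      refine ⟨ξ (0, 1), ?_⟩
      apply LinearMap.ext
      intro V
      have hV : V = ((V.1, 0) : H × ℝ) + V.2 • ((0:H), (1:ℝ)) := by
        simp [Prod.ext_iff]
      rw [hV, map_add, map_smul, map_add, map_smul]
      have : ξ ((V.1, 0) : H × ℝ) = 0 := hx V.1
      simp [this, smul_eq_mul, mul_comm]
    · rintro ⟨c, rfl⟩ η
      have he : ((c • (LinearMap.snd ℝ H ℝ : Module.Dual ℝ (H × ℝ))).comp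
          (LinearMap.inl ℝ H ℝ)) = 0 := by
        ext y; simp
      unfold sdGamma
      rw [he, map_zero]
      simp
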